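/- arXiv:1312.1239 — 2 statements merged into one kernel-verified Lean document; each statement's English description precedes it below -/
import Mathlib

section
/- Let A and D be invertible complex matrices and B, C matrices of compatible sizes with D B = B A. Set Z = D − B A^{-1} C and s = ind(Z). Then (A − C D^{-1} B)^d = A^{-1} + A^{-1} C Z^d D^{-1} B − ∑_{i=0}^{s-1} A^{-i-2} C Z^i Z^π D^{-1} B. -/
/-! Write `E = D⁻¹ B` and `S = A - C E`. The hypothesis `D B = B A` gives `E A = D E`, hence
`E S = Z E` with `Z = D - E C`. For `W = ∑_{i<s} A⁻¹^(i+1) C Z^i Z^π E`, the candidate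
`X = A⁻¹ (1 + C Z^d E - W)` satisfies `E X = Z^d E`, `S X = X S = 1 - W`, `W X = 0` and
`W S^s = 0`: the sums telescope and die at `i = s` because `Z^s Z^π = 0`. These identities make
`X` a Drazin inverse of `S`, which is unique. A matrix has a Drazin inverse because its
characteristic polynomial splits as `X^k q` with `q(0) ≠ 0`, and `ind Z` is a valid index
because once the ranks of the powers of `Z` stabilise, so do their kernels. -/

open Matrix Finset

attribute [local instance] Classical.propDecidable

noncomputable def drazin {n : Type*} [Fintype n] [DecidableEq n]
    (A : Matrix n n ℂ) : Matrix n n ℂ :=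
  if h : ∃ X : Matrix n n ℂ,
      A * X = X * A ∧ X * A * X = X ∧ ∃ k : ℕ, A ^ (k + 1) * X = A ^ k
  then h.choose else 0

noncomputable def ind {n : Type*} [Fintype n] [DecidableEq n]
    (A : Matrix n n ℂ) : ℕ :=
  sInf {k : ℕ | (A ^ k).rank = (A ^ (k + 1)).rank}

noncomputable def spi {n : Type*} [Fintype n] [DecidableEq n]
    (A : Matrix n n ℂ) : Matrix n n ℂ :=
  1 - A * drazin A

structure IsDrazinInverse {M : Type*} [Monoid M] (a x : M) (k : ℕ) : Prop where
  commute : Commute a x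
  mul_mul_self : x * a * x = x
  pow_succ_mul : a ^ (k + 1) * x = a ^ k

namespace IsDrazinInverse

section Monoid

variable {M : Type*} [Monoid M] {a x y : M} {k l : ℕ}

theorem pow_succ_mul_of_le (h : IsDrazinInverse a x k) {N : ℕ} (hN : k ≤ N) :
    a ^ (N + 1) * x = a ^ N := by
  obtain ⟨j, rfl⟩ := Nat.exists_eq_add_of_le hN
  rw [show k + j + 1 = j + (k + 1) by omega, pow_add, mul_assoc, h.pow_succ_mul, ← pow_add,
    add_comm]

theorem isIdempotentElem_mul (h : IsDrazinInverse a x k) : IsIdempotentElem (x * a) := by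
  rw [IsIdempotentElem, ← mul_assoc, h.mul_mul_self]

theorem isIdempotentElem_mul' (h : IsDrazinInverse a x k) : IsIdempotentElem (a * x) :=
  h.commute.eq ▸ h.isIdempotentElem_mul

theorem mul_pow_mul_self (h : IsDrazinInverse a x k) (N : ℕ) : (x * a) ^ N * x = x := by
  induction N with
  | zero => rw [pow_zero, one_mul]
  | succ N ih => rw [pow_succ, mul_assoc, h.mul_mul_self, ih]

theorem pow_succ_mul_pow (h : IsDrazinInverse a x k) (N : ℕ) : x ^ (N + 1) * a ^ N = x := by
  rw [pow_succ', mul_assoc, ← h.commute.symm.mul_pow,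
    (((Commute.refl x).mul_right h.commute.symm).pow_right N).eq, h.mul_pow_mul_self]

theorem unique (hx : IsDrazinInverse a x k) (hy : IsDrazinInverse a y l) : x = y := by
  have hxN := hx.pow_succ_mul_of_le (N := k + l) (by omega)
  have hyN := hy.pow_succ_mul_of_le (N := k + l) (by omega)
  calc x = x ^ (k + l + 1) * a ^ (k + l) := (hx.pow_succ_mul_pow _).symm
    _ = (x * a) ^ (k + l + 1) * y := by rw [← hyN, ← mul_assoc, hx.commute.symm.mul_pow]
    _ = x * (a * y) ^ (k + l + 1) := by
      rw [hx.isIdempotentElem_mul.pow_succ_eq, hy.isIdempotentElem_mul'.pow_succ_eq, mul_assoc]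
    _ = a ^ (k + l) * y ^ (k + l + 1) := by
      rw [hy.commute.mul_pow, ← mul_assoc, ← (hx.commute.pow_left _).eq, hxN]
    _ = y := by rw [(hy.commute.pow_pow _ _).eq, hy.pow_succ_mul_pow]

end Monoid

section Ring

variable {R : Type*} [Ring R]

theorem of_mul_eq_one_sub {S X W : R} {s : ℕ} (hSX : S * X = 1 - W) (hXS : X * S = 1 - W)
    (hWX : W * X = 0) (hWS : W * S ^ s = 0) : IsDrazinInverse S X s := by
  have hcomm : Commute S X := hSX.trans hXS.symm
  have hSW : Commute S W := by
    rw [show W = 1 - S * X by rw [hSX, sub_sub_cancel]]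
    exact (Commute.one_right S).sub_right ((Commute.refl S).mul_right hcomm)
  refine ⟨hcomm, ?_, ?_⟩
  · rw [hXS, sub_mul, one_mul, hWX, sub_zero]
  · rw [pow_succ, mul_assoc, hSX, mul_sub, mul_one, (hSW.pow_left s).eq, hWS, sub_zero]

theorem commute_one_sub_mul {a x : R} {k : ℕ} (h : IsDrazinInverse a x k) :
    Commute a (1 - a * x) :=
  (Commute.one_right a).sub_right ((Commute.refl a).mul_right h.commute)

theorem pow_mul_one_sub_mul {a x : R} {k : ℕ} (h : IsDrazinInverse a x k) :
    a ^ k * (1 - a * x) = 0 := by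
  rw [mul_sub, mul_one, ← mul_assoc, ← pow_succ, h.pow_succ_mul, sub_self]

end Ring

end IsDrazinInverse

open Polynomial in
theorem exists_isDrazinInverse_of_aeval_eq_zero {K R : Type*} [Field K] [Ring R] [Algebra K R]
    {a : R} {p : K[X]} (hp : p ≠ 0) (hpa : aeval a p = 0) : ∃ x k, IsDrazinInverse a x k := by
  obtain ⟨q, hpq, hXq⟩ := p.exists_eq_pow_rootMultiplicity_mul_and_not_dvd hp 0
  rw [map_zero, sub_zero] at hpq hXq
  set k := p.rootMultiplicity 0
  obtain ⟨u, v, huv⟩ : IsCoprime ((X : K[X]) ^ (k + 1)) q :=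
    ((irreducible_X.coprime_iff_not_dvd).2 hXq).pow_left
  -- `w = u X^k` inverts `X` modulo `q` and vanishes modulo `X^k`
  have hw : u * X ^ k * X * (u * X ^ k) = u * X ^ k - u * v * p := by
    rw [hpq]; linear_combination (u * X ^ k) * huv
  have hXw : X ^ (k + 1) * (u * X ^ k) = X ^ k - v * p := by
    rw [hpq]; linear_combination X ^ k * huv
  refine ⟨aeval a (u * X ^ k), k, ⟨?_, ?_, ?_⟩⟩
  · simpa only [aeval_X] using (commute_X (u * X ^ k)).map (aeval a)
  · simpa [hpa] using congrArg (aeval a) hw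
  · simpa [hpa] using congrArg (aeval a) hXw

section Matrix

open LinearMap

variable {K : Type*} [Field K] {p : Type*} [Fintype p] [DecidableEq p]

theorem Matrix.exists_isDrazinInverse (A : Matrix p p K) : ∃ X k, IsDrazinInverse A X k :=
  exists_isDrazinInverse_of_aeval_eq_zero A.charpoly_monic.ne_zero A.aeval_self_charpoly

theorem IsDrazinInverse.rank_pow_eq {A X : Matrix p p K} {k : ℕ} (h : IsDrazinInverse A X k) :
    (A ^ k).rank = (A ^ (k + 1)).rank := by
  refine le_antisymm ?_ ?_
  · conv_lhs => rw [← h.pow_succ_mul]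
    exact rank_mul_le_left _ _
  · rw [pow_succ]
    exact rank_mul_le_left _ _

theorem Matrix.ker_toLin'_pow_eq_of_rank_pow_eq {A : Matrix p p K} {s : ℕ}
    (h : (A ^ s).rank = (A ^ (s + 1)).rank) :
    ker (toLin' A ^ s) = ker (toLin' A ^ (s + 1)) := by
  have hrank (j : ℕ) : (A ^ j).rank = Module.finrank K (range (toLin' A ^ j)) := by
    rw [Matrix.rank, ← toLin'_apply', toLin'_pow]
  have hle : ker (toLin' A ^ s) ≤ ker (toLin' A ^ (s + 1)) := by
    rw [pow_succ', Module.End.mul_eq_comp]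
    exact ker_le_ker_comp _ _
  refine Submodule.eq_of_le_of_finrank_eq hle ?_
  have := (toLin' A ^ s).finrank_range_add_finrank_ker
  have := (toLin' A ^ (s + 1)).finrank_range_add_finrank_ker
  rw [hrank, hrank] at h
  omega

theorem IsDrazinInverse.of_rank_pow_eq {A X : Matrix p p K} {k s : ℕ}
    (h : IsDrazinInverse A X k) (hs : (A ^ s).rank = (A ^ (s + 1)).rank) :
    IsDrazinInverse A X s := by
  refine ⟨h.commute, h.mul_mul_self, ?_⟩
  suffices A ^ s * (1 - A * X) = 0 by
    rwa [mul_sub, mul_one, ← mul_assoc, ← pow_succ, sub_eq_zero, eq_comm] at this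
  refine toLin'.injective (LinearMap.ext fun v => ?_)
  have hker := Module.End.ker_pow_constant (ker_toLin'_pow_eq_of_rank_pow_eq hs) k
  have hv : toLin' (1 - A * X) v ∈ ker (toLin' A ^ (s + k)) := by
    rw [mem_ker, pow_add, Module.End.mul_apply, ← toLin'_pow A k, ← toLin'_mul_apply,
      h.pow_mul_one_sub_mul, map_zero, LinearMap.zero_apply, map_zero]
  rw [← hker, mem_ker, ← toLin'_pow A s, ← toLin'_mul_apply] at hv
  rw [hv, map_zero, LinearMap.zero_apply]

end Matrix

section Complex

variable {p : Type*} [Fintype p] [DecidableEq p]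

theorem exists_isDrazinInverse_drazin (A : Matrix p p ℂ) :
    ∃ k, IsDrazinInverse A (drazin A) k := by
  obtain ⟨X, k, hX⟩ := A.exists_isDrazinInverse
  have hex : ∃ X : Matrix p p ℂ,
      A * X = X * A ∧ X * A * X = X ∧ ∃ k : ℕ, A ^ (k + 1) * X = A ^ k :=
    ⟨X, hX.commute, hX.mul_mul_self, k, hX.pow_succ_mul⟩
  rw [drazin, dif_pos hex]
  obtain ⟨hcomm, hXAX, k, hk⟩ := hex.choose_spec
  exact ⟨k, hcomm, hXAX, hk⟩

theorem IsDrazinInverse.drazin_eq {A X : Matrix p p ℂ} {k : ℕ} (h : IsDrazinInverse A X k) :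
    drazin A = X :=
  (exists_isDrazinInverse_drazin A).choose_spec.unique h

theorem isDrazinInverse_drazin_ind (A : Matrix p p ℂ) :
    IsDrazinInverse A (drazin A) (ind A) := by
  obtain ⟨k, hk⟩ := exists_isDrazinInverse_drazin A
  exact hk.of_rank_pow_eq (Nat.sInf_mem (s := {j | (A ^ j).rank = (A ^ (j + 1)).rank})
    ⟨k, hk.rank_pow_eq⟩)

end Complex

section Woodbury

variable {R : Type*} [Ring R] {n m : Type*} [Fintype n] [Fintype m] {A a S : Matrix n n R}
  {D d Z : Matrix m m R} {C : Matrix n m R} {E F : Matrix m n R}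

theorem mul_mul_eq_of_mul_eq {P : Matrix m m R} (hES : E * S = Z * E) (hPZ : Commute P Z) :
    P * E * S = Z * (P * E) := by
  rw [Matrix.mul_assoc, hES, ← Matrix.mul_assoc, hPZ.eq, Matrix.mul_assoc]

variable [DecidableEq n] [DecidableEq m]

theorem Matrix.mul_pow_eq_pow_mul_of_mul_eq (h : F * S = Z * F) (j : ℕ) :
    F * S ^ j = Z ^ j * F := by
  induction j with
  | zero => rw [pow_zero, pow_zero, Matrix.mul_one, Matrix.one_mul]
  | succ j ih =>
    rw [pow_succ, ← Matrix.mul_assoc, ih, Matrix.mul_assoc, h, ← Matrix.mul_assoc, ← pow_succ]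

theorem Matrix.mul_inv_eq_inv_mul_of_mul_eq (hA : A * a = 1) (hD : d * D = 1)
    (hEA : E * A = D * E) : E * a = d * E :=
  calc E * a = d * (D * E) * a := by rw [← Matrix.mul_assoc, hD, Matrix.one_mul]
    _ = d * E := by rw [← hEA, Matrix.mul_assoc, Matrix.mul_assoc, hA, Matrix.mul_one]

theorem mul_sum_pow_mul (hEa : E * a = d * E) (hD : d * D = 1) (hEC : E * C = D - Z)
    (F : Matrix m n R) (s : ℕ) :
    E * ∑ i ∈ range s, a ^ (i + 1) * C * Z ^ i * F = F - d ^ s * (Z ^ s * F) := by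
  have hterm (i : ℕ) : E * (a ^ (i + 1) * C * Z ^ i * F) =
      d ^ i * (Z ^ i * F) - d ^ (i + 1) * (Z ^ (i + 1) * F) := by
    calc E * (a ^ (i + 1) * C * Z ^ i * F) = d ^ (i + 1) * ((E * C) * (Z ^ i * F)) := by
          rw [← Matrix.mul_assoc, ← Matrix.mul_assoc, ← Matrix.mul_assoc,
            mul_pow_eq_pow_mul_of_mul_eq hEa]
          simp only [Matrix.mul_assoc]
      _ = d ^ i * (d * D) * (Z ^ i * F) - d ^ (i + 1) * (Z * Z ^ i * F) := by
          rw [hEC, Matrix.sub_mul, Matrix.mul_sub, pow_succ]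
          simp only [Matrix.mul_assoc]
      _ = d ^ i * (Z ^ i * F) - d ^ (i + 1) * (Z ^ (i + 1) * F) := by
          rw [hD, Matrix.mul_one, ← pow_succ']
  rw [Matrix.mul_sum, sum_congr rfl fun i _ => hterm i, sum_range_sub', pow_zero, pow_zero,
    Matrix.one_mul, Matrix.one_mul]

theorem mul_add_sum_pow_mul_mul (hFS : F * S = Z * F) (s : ℕ) :
    a * (C * F + (∑ i ∈ range s, a ^ (i + 1) * C * Z ^ i * F) * S) =
      ∑ i ∈ range (s + 1), a ^ (i + 1) * C * Z ^ i * F := by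
  rw [sum_range_succ', Matrix.sum_mul, Matrix.mul_add, Matrix.mul_sum, add_comm]
  congr 1
  · refine sum_congr rfl fun i _ => ?_
    simp only [Matrix.mul_assoc, hFS]
    rw [← Matrix.mul_assoc (Z ^ i), ← pow_succ, ← Matrix.mul_assoc a, ← pow_succ']
  · rw [zero_add, pow_one, pow_zero, Matrix.mul_one, Matrix.mul_assoc]

theorem sum_pow_mul_mul_eq_zero {Y : Matrix n n R} (hFY : F * Y = 0) (s : ℕ) :
    (∑ i ∈ range s, a ^ (i + 1) * C * Z ^ i * F) * Y = 0 := by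
  simp only [Matrix.sum_mul, Matrix.mul_assoc, hFY, Matrix.mul_zero, sum_const_zero]

theorem mul_woodbury_eq {Zd : Matrix m m R} {s : ℕ} (hEa : E * a = d * E) (hD : d * D = 1)
    (hEC : E * C = D - Z) (hs : Z ^ s * (1 - Z * Zd) = 0) :
    E * (a * (1 + C * Zd * E - ∑ i ∈ range s, a ^ (i + 1) * C * Z ^ i * ((1 - Z * Zd) * E))) =
      Zd * E := by
  set P := 1 - Z * Zd
  set W := ∑ i ∈ range s, a ^ (i + 1) * C * Z ^ i * (P * E)
  have hEW : E * W = P * E := by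
    rw [mul_sum_pow_mul hEa hD hEC, ← Matrix.mul_assoc (Z ^ s), hs, Matrix.zero_mul,
      Matrix.mul_zero, sub_zero]
  calc E * (a * (1 + C * Zd * E - W)) = d * (E + E * C * (Zd * E) - E * W) := by
        rw [← Matrix.mul_assoc, hEa, Matrix.mul_assoc, Matrix.mul_sub, Matrix.mul_add,
          Matrix.mul_one]
        simp only [Matrix.mul_assoc]
    _ = d * D * (Zd * E) := by
        rw [hEW, hEC]
        simp only [P, Matrix.sub_mul, Matrix.mul_sub, Matrix.mul_add, Matrix.one_mul,
          Matrix.mul_assoc]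
        abel
    _ = Zd * E := by rw [hD, Matrix.one_mul]

theorem woodbury_mul_eq {Zd : Matrix m m R} {s : ℕ} (ha : a * A = 1)
    (hES : E * (A - C * E) = Z * E) (hZd : IsDrazinInverse Z Zd s) :
    a * (1 + C * Zd * E - ∑ i ∈ range s, a ^ (i + 1) * C * Z ^ i * ((1 - Z * Zd) * E)) *
      (A - C * E) = 1 - ∑ i ∈ range s, a ^ (i + 1) * C * Z ^ i * ((1 - Z * Zd) * E) := by
  set S := A - C * E
  set P := 1 - Z * Zd
  set W := ∑ i ∈ range s, a ^ (i + 1) * C * Z ^ i * (P * E)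
  have hPES : P * E * S = Z * (P * E) := mul_mul_eq_of_mul_eq hES hZd.commute_one_sub_mul.symm
  have haWS : a * (W * S) = W - a * (C * (P * E)) := by
    refine eq_sub_of_add_eq' ?_
    rw [← Matrix.mul_add, mul_add_sum_pow_mul_mul hPES s, sum_range_succ,
      Matrix.mul_assoc _ (Z ^ s), ← Matrix.mul_assoc (Z ^ s), hZd.pow_mul_one_sub_mul,
      Matrix.zero_mul, Matrix.mul_zero, add_zero]
  calc a * (1 + C * Zd * E - W) * S = a * S + a * (C * (Zd * (E * S))) - a * (W * S) := by
        simp only [Matrix.mul_assoc, Matrix.add_mul, Matrix.sub_mul, Matrix.one_mul,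
          Matrix.mul_add, Matrix.mul_sub]
    _ = 1 - W := by
        rw [Matrix.mul_sub, ha, haWS, hES, ← Matrix.mul_assoc Zd Z E, ← hZd.commute.eq]
        simp only [P, Matrix.sub_mul, Matrix.one_mul, Matrix.mul_sub, Matrix.mul_assoc]
        abel

theorem isDrazinInverse_sub_mul {Zd : Matrix m m R} {s : ℕ} (hA : A * a = 1) (ha : a * A = 1)
    (hD : d * D = 1) (hEA : E * A = D * E) (hZ : Z = D - E * C) (hZd : IsDrazinInverse Z Zd s) :
    IsDrazinInverse (A - C * E)
      (a + a * C * Zd * E - ∑ i ∈ range s, a ^ (i + 2) * C * Z ^ i * (1 - Z * Zd) * E) s := by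
  set S := A - C * E
  set P := 1 - Z * Zd
  set W := ∑ i ∈ range s, a ^ (i + 1) * C * Z ^ i * (P * E)
  have hEC : E * C = D - Z := by rw [hZ, sub_sub_cancel]
  have hES : E * S = Z * E := by
    rw [Matrix.mul_sub, hEA, ← Matrix.mul_assoc, ← Matrix.sub_mul, hZ]
  have hZsP : Z ^ s * P = 0 := hZd.pow_mul_one_sub_mul
  have hX : a + a * C * Zd * E - ∑ i ∈ range s, a ^ (i + 2) * C * Z ^ i * P * E =
      a * (1 + C * Zd * E - W) := by
    simp only [W, Matrix.mul_add, Matrix.mul_sub, Matrix.mul_one, Matrix.mul_sum,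
      ← Matrix.mul_assoc, ← pow_succ']
  rw [hX]
  set X := a * (1 + C * Zd * E - W)
  have hEX : E * X = Zd * E := mul_woodbury_eq (mul_inv_eq_inv_mul_of_mul_eq hA hD hEA) hD hEC hZsP
  have hSX : S * X = 1 - W := by
    rw [Matrix.sub_mul, Matrix.mul_assoc C E X, hEX, ← Matrix.mul_assoc A a, hA, Matrix.one_mul,
      Matrix.mul_assoc C Zd E]
    abel
  have hWX : W * X = 0 := sum_pow_mul_mul_eq_zero (by
    rw [Matrix.mul_assoc, hEX, ← Matrix.mul_assoc, Matrix.sub_mul, Matrix.one_mul,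
      hZd.commute.eq, hZd.mul_mul_self, sub_self, Matrix.zero_mul]) s
  have hWS : W * S ^ s = 0 := sum_pow_mul_mul_eq_zero (by
    rw [mul_pow_eq_pow_mul_of_mul_eq (mul_mul_eq_of_mul_eq hES hZd.commute_one_sub_mul.symm),
      ← Matrix.mul_assoc, hZsP, Matrix.zero_mul]) s
  exact IsDrazinInverse.of_mul_eq_one_sub hSX (woodbury_mul_eq ha hES hZd) hWX hWS

end Woodbury

theorem stmt17 {n m : ℕ} (A : Matrix (Fin n) (Fin n) ℂ) (D : Matrix (Fin m) (Fin m) ℂ)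
    (C : Matrix (Fin n) (Fin m) ℂ) (B : Matrix (Fin m) (Fin n) ℂ)
    (hA : IsUnit A) (hD : IsUnit D) (h : D * B = B * A)
    (Z : Matrix (Fin m) (Fin m) ℂ) (hZ : Z = D - B * A⁻¹ * C) :
    drazin (A - C * D⁻¹ * B) = A⁻¹ + A⁻¹ * C * drazin Z * D⁻¹ * B -
      ∑ i ∈ range (ind Z), A⁻¹ ^ (i + 2) * C * Z ^ i * spi Z * D⁻¹ * B := by
  have hA' := (isUnit_iff_isUnit_det A).mp hA
  have hD' := (isUnit_iff_isUnit_det D).mp hD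
  have hBA : B * A⁻¹ = D⁻¹ * B := by
    rw [← Matrix.one_mul (B * A⁻¹), ← nonsing_inv_mul D hD', Matrix.mul_assoc,
      ← Matrix.mul_assoc D, h, Matrix.mul_assoc, mul_nonsing_inv A hA', Matrix.mul_one]
  have hEA : D⁻¹ * B * A = D * (D⁻¹ * B) := by
    rw [Matrix.mul_assoc, ← h, ← Matrix.mul_assoc, ← Matrix.mul_assoc, nonsing_inv_mul D hD',
      mul_nonsing_inv D hD']
  have hZE : Z = D - D⁻¹ * B * C := by rw [hZ, hBA]
  have hdrazin := isDrazinInverse_sub_mul (mul_nonsing_inv A hA') (nonsing_inv_mul A hA')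
    (nonsing_inv_mul D hD') hEA hZE (isDrazinInverse_drazin_ind Z)
  simpa only [spi, Matrix.mul_assoc] using hdrazin.drazin_eq
end

section
/- Let A, B, C, D be complex matrices of compatible sizes with A, D square, and set S = A − C D^d B. If A^π C D^d B = 0, then S A^π is nilpotent with ind(A) ≤ ind(S A^π) ≤ ind(A) + 1, and in particular (S A^π)^d = 0. -/
open Matrix Finset

attribute [local instance] Classical.propDecidable

/-!
Put `P = A^π = 1 - A A^d`, an idempotent commuting with `A`; the hypothesis says `P S = P A`,
so `P (S P)^j = A^j P` and `(S P)^(j+1) = S A^j P`. For `N = S P` everything then follows from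
one fact: `A^j P = 0` iff the rank of `A^j` is stable. One way, `A^j = A^(j+1) A^d`; the other,
a rank-stable `A^j` factors as `V A^(j+i)` for every `i`, and `A^(j+i) P = 0` for large `i`.
Hence `N^(ind A + 1) = 0`; and since nilpotency with the same factorization gives
`N^(ind N) = 0`, also `A^(ind N) P = P N^(ind N) = 0`, i.e. `ind A ≤ ind N`.
-/

def IsDrazinInverse_s19 {R : Type*} [Monoid R] (a x : R) : Prop :=
  a * x = x * a ∧ x * a * x = x ∧ ∃ k : ℕ, a ^ (k + 1) * x = a ^ k

section Monoid

variable {R : Type*} [Monoid R] {a u v : R} {k : ℕ}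

theorem pow_eq_pow_add_mul_pow (h : a ^ k = a ^ (k + 1) * u) :
    ∀ j, a ^ k = a ^ (k + j) * u ^ j
  | 0 => by simp
  | j + 1 => calc
    a ^ k = a ^ j * a ^ k * u ^ j := by rw [← pow_add, add_comm, ← pow_eq_pow_add_mul_pow h j]
    _ = a ^ j * (a ^ (k + 1) * u) * u ^ j := by rw [← h]
    _ = a ^ (k + (j + 1)) * u ^ (j + 1) := by
      rw [show k + (j + 1) = j + (k + 1) by omega, pow_add a j, pow_succ' u]
      simp only [mul_assoc]

theorem pow_eq_pow_mul_pow_add (h : a ^ k = v * a ^ (k + 1)) :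
    ∀ j, a ^ k = v ^ j * a ^ (k + j)
  | 0 => by simp
  | j + 1 => calc
    a ^ k = v ^ j * a ^ k * a ^ j := by rw [mul_assoc, ← pow_add, ← pow_eq_pow_mul_pow_add h j]
    _ = v ^ j * (v * a ^ (k + 1)) * a ^ j := by rw [← h]
    _ = v ^ (j + 1) * a ^ (k + (j + 1)) := by
      rw [← add_assoc, add_right_comm, pow_add a (k + 1), pow_succ v]
      simp only [mul_assoc]

theorem isDrazinInverse_of_pow_eq (hu : a ^ k = a ^ (k + 1) * u) (hv : a ^ k = v * a ^ (k + 1)) :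
    IsDrazinInverse_s19 a (a ^ k * u ^ (k + 1)) := by
  have hx : a ^ k * u ^ (k + 1) = v ^ (k + 1) * a ^ k := by
    conv_lhs => rw [pow_eq_pow_mul_pow_add hv (k + 1)]
    rw [mul_assoc, ← pow_eq_pow_add_mul_pow hu]
  have hax : a * (a ^ k * u ^ (k + 1)) = a ^ k * u ^ k := by
    rw [← mul_assoc, ← pow_succ', pow_succ' u, ← mul_assoc, ← hu]
  have hxa : a ^ k * u ^ (k + 1) * a = v ^ k * a ^ k := by
    rw [hx, pow_succ v, mul_assoc, mul_assoc, ← pow_succ, ← hv]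
  have hcomm : a ^ k * u ^ k = v ^ k * a ^ k := by
    conv_lhs => rw [pow_eq_pow_mul_pow_add hv k]
    rw [mul_assoc, ← pow_eq_pow_add_mul_pow hu]
  refine ⟨by rw [hax, hxa, hcomm], ?_, k, ?_⟩
  · rw [mul_assoc, hax, hx, mul_assoc, ← mul_assoc (a ^ k), ← pow_add,
      ← pow_eq_pow_add_mul_pow hu]
  · rw [← mul_assoc, ← pow_add, add_comm, ← pow_eq_pow_add_mul_pow hu]

theorem IsIdempotentElem.mul_pow_mul_eq_pow_mul {s p : R}
    (hp : IsIdempotentElem p) (hap : Commute a p) (hps : p * s = p * a) (j : ℕ) :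
    p * (s * p) ^ j = a ^ j * p := by
  induction j with
  | zero => simp
  | succ j ih =>
    rw [pow_succ', ← mul_assoc, ← mul_assoc, hps, ← hap.eq, mul_assoc a p p, hp.eq, mul_assoc,
      ih, ← mul_assoc, ← pow_succ']

end Monoid

section MonoidWithZero

variable {R : Type*} [MonoidWithZero R] {a v : R} {k : ℕ}

theorem IsNilpotent.pow_eq_zero_of_pow_eq_mul_pow_succ (ha : IsNilpotent a)
    (h : a ^ k = v * a ^ (k + 1)) : a ^ k = 0 := by
  obtain ⟨j, hj⟩ := ha
  rw [pow_eq_pow_mul_pow_add h j, add_comm, pow_add, hj, zero_mul, mul_zero]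

theorem IsDrazinInverse_s19.eq_zero_of_isNilpotent {x : R} (hx : IsDrazinInverse_s19 a x)
    (ha : IsNilpotent a) : x = 0 := by
  obtain ⟨hcomm, hxax, -⟩ := hx
  obtain ⟨j, hj⟩ := ha
  have hfix (i : ℕ) : x = x * (a * x) ^ i := by
    induction i with
    | zero => simp
    | succ i ih => rw [pow_succ', ← mul_assoc, ← mul_assoc, hxax, ← ih]
  rw [hfix j, Commute.mul_pow hcomm, hj, zero_mul, mul_zero]

end MonoidWithZero

section Ring

variable {R : Type*} [Ring R] {a x : R}

theorem IsDrazinInverse_s19.commute_one_sub_mul (hx : IsDrazinInverse_s19 a x) :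
    Commute a (1 - a * x) := by
  have : a * (a * x) = a * x * a := by rw [mul_assoc, ← hx.1]
  simp only [Commute, SemiconjBy, mul_sub, sub_mul, mul_one, one_mul, this]

theorem IsDrazinInverse_s19.isIdempotentElem_one_sub_mul (hx : IsDrazinInverse_s19 a x) :
    IsIdempotentElem (1 - a * x) := by
  have : a * x * (a * x) = a * x := by rw [mul_assoc, ← mul_assoc x, hx.2.1]
  simp only [IsIdempotentElem, mul_sub, sub_mul, mul_one, one_mul, this, sub_self, sub_zero]

theorem pow_mul_one_sub_mul_eq_zero_iff {k : ℕ} :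
    a ^ k * (1 - a * x) = 0 ↔ a ^ (k + 1) * x = a ^ k := by
  rw [mul_sub, mul_one, ← mul_assoc, ← pow_succ, sub_eq_zero, eq_comm]

theorem IsDrazinInverse_s19.exists_pow_mul_one_sub_mul_eq_zero (hx : IsDrazinInverse_s19 a x) :
    ∃ k, ∀ j, k ≤ j → a ^ j * (1 - a * x) = 0 := by
  obtain ⟨k, hk⟩ := hx.2.2
  refine ⟨k, fun j hj => ?_⟩
  rw [← Nat.sub_add_cancel hj, pow_add, mul_assoc, pow_mul_one_sub_mul_eq_zero_iff.2 hk, mul_zero]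

end Ring

section Matrix

variable {K : Type*} [Field K] {l m n : Type*} [Fintype n] [DecidableEq n]

theorem Matrix.rank_pow_succ_le (A : Matrix n n K) (k : ℕ) :
    (A ^ (k + 1)).rank ≤ (A ^ k).rank := by
  rw [pow_succ]
  exact rank_mul_le_left _ _

theorem Matrix.exists_rank_pow_eq_rank_pow_succ (A : Matrix n n K) :
    ∃ k, (A ^ k).rank = (A ^ (k + 1)).rank := by
  let r := fun k => (A ^ k).rank
  exact ⟨Function.argmin r, le_antisymm (Function.argmin_le r _) (A.rank_pow_succ_le _)⟩

theorem Matrix.exists_eq_mul_of_range_le [Fintype m]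
    {A : Matrix l m K} {B : Matrix l n K}
    (h : LinearMap.range B.mulVecLin ≤ LinearMap.range A.mulVecLin) :
    ∃ C : Matrix m n K, B = A * C := by
  have hcol (j : n) : ∃ c, A *ᵥ c = fun i => B i j := h ⟨Pi.single j 1, by ext; simp⟩
  choose c hc using hcol
  exact ⟨(Matrix.of c)ᵀ, by ext i j; rw [← congrFun (hc j) i]; rfl⟩

theorem Matrix.exists_pow_eq_pow_succ_mul {A : Matrix n n K} {k : ℕ}
    (h : (A ^ k).rank = (A ^ (k + 1)).rank) : ∃ U, A ^ k = A ^ (k + 1) * U := by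
  refine exists_eq_mul_of_range_le (Submodule.eq_of_le_of_finrank_eq ?_ h.symm).ge
  rw [pow_succ, mulVecLin_mul]
  exact LinearMap.range_comp_le_range _ _

theorem Matrix.exists_pow_eq_mul_pow_succ {A : Matrix n n K} {k : ℕ}
    (h : (A ^ k).rank = (A ^ (k + 1)).rank) : ∃ V, A ^ k = V * A ^ (k + 1) := by
  obtain ⟨W, hW⟩ := exists_pow_eq_pow_succ_mul (A := Aᵀ) (k := k)
    (by rwa [← transpose_pow, ← transpose_pow, rank_transpose, rank_transpose])
  refine ⟨Wᵀ, ?_⟩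
  rw [← transpose_pow, ← transpose_pow] at hW
  simpa using congrArg transpose hW

theorem Matrix.rank_pow_eq_rank_pow_succ_of_pow_eq {A X : Matrix n n K} {k : ℕ}
    (h : A ^ k = A ^ (k + 1) * X) : (A ^ k).rank = (A ^ (k + 1)).rank :=
  le_antisymm (h ▸ rank_mul_le_left _ _) (A.rank_pow_succ_le k)

end Matrix

section Drazin

variable {n : Type*} [Fintype n] [DecidableEq n] {A : Matrix n n ℂ} {k : ℕ}

theorem isDrazinInverse_drazin (A : Matrix n n ℂ) : IsDrazinInverse_s19 A (drazin A) := by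
  have hex : ∃ X, IsDrazinInverse_s19 A X := by
    obtain ⟨k, hk⟩ := A.exists_rank_pow_eq_rank_pow_succ
    obtain ⟨U, hU⟩ := exists_pow_eq_pow_succ_mul hk
    obtain ⟨V, hV⟩ := exists_pow_eq_mul_pow_succ hk
    exact ⟨_, isDrazinInverse_of_pow_eq hU hV⟩
  unfold IsDrazinInverse_s19 at hex
  rw [drazin, dif_pos hex]
  exact hex.choose_spec

theorem drazin_eq_zero_of_isNilpotent (hA : IsNilpotent A) : drazin A = 0 :=
  (isDrazinInverse_drazin A).eq_zero_of_isNilpotent hA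

theorem rank_pow_ind (A : Matrix n n ℂ) : (A ^ ind A).rank = (A ^ (ind A + 1)).rank :=
  Nat.sInf_mem A.exists_rank_pow_eq_rank_pow_succ

theorem ind_le_of_rank_pow_eq (h : (A ^ k).rank = (A ^ (k + 1)).rank) : ind A ≤ k :=
  Nat.sInf_le h

theorem ind_le_of_pow_eq_zero (h : A ^ k = 0) : ind A ≤ k :=
  ind_le_of_rank_pow_eq (by rw [pow_succ, h, zero_mul])

theorem pow_ind_eq_zero_of_isNilpotent (hA : IsNilpotent A) : A ^ ind A = 0 := by
  obtain ⟨V, hV⟩ := exists_pow_eq_mul_pow_succ (rank_pow_ind A)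
  exact hA.pow_eq_zero_of_pow_eq_mul_pow_succ hV

theorem pow_ind_mul_spi_eq_zero (A : Matrix n n ℂ) : A ^ ind A * spi A = 0 := by
  obtain ⟨V, hV⟩ := exists_pow_eq_mul_pow_succ (rank_pow_ind A)
  obtain ⟨k, hk⟩ := (isDrazinInverse_drazin A).exists_pow_mul_one_sub_mul_eq_zero
  rw [pow_eq_pow_mul_pow_add hV k, mul_assoc, spi, hk _ (Nat.le_add_left _ _), mul_zero]

theorem ind_le_of_pow_mul_spi_eq_zero (h : A ^ k * spi A = 0) : ind A ≤ k :=
  ind_le_of_rank_pow_eq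
    (rank_pow_eq_rank_pow_succ_of_pow_eq (pow_mul_one_sub_mul_eq_zero_iff.1 h).symm)

end Drazin

theorem stmt19 {n m : ℕ} (A : Matrix (Fin n) (Fin n) ℂ) (D : Matrix (Fin m) (Fin m) ℂ)
    (C : Matrix (Fin n) (Fin m) ℂ) (B : Matrix (Fin m) (Fin n) ℂ)
    (S : Matrix (Fin n) (Fin n) ℂ) (hS : S = A - C * drazin D * B)
    (h : spi A * (C * drazin D * B) = 0) :
    IsNilpotent (S * spi A) ∧ ind A ≤ ind (S * spi A) ∧
      ind (S * spi A) ≤ ind A + 1 ∧ drazin (S * spi A) = 0 := by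
  have hA := isDrazinInverse_drazin A
  have hspi_S : spi A * S = spi A * A := by rw [hS, mul_sub, h, sub_zero]
  have hspi_pow (j : ℕ) : spi A * (S * spi A) ^ j = A ^ j * spi A :=
    hA.isIdempotentElem_one_sub_mul.mul_pow_mul_eq_pow_mul hA.commute_one_sub_mul hspi_S j
  have hpow : (S * spi A) ^ (ind A + 1) = 0 := by
    rw [pow_succ', mul_assoc, hspi_pow, pow_ind_mul_spi_eq_zero, mul_zero]
  have hnil : IsNilpotent (S * spi A) := ⟨_, hpow⟩
  refine ⟨hnil, ind_le_of_pow_mul_spi_eq_zero ?_, ind_le_of_pow_eq_zero hpow,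
    drazin_eq_zero_of_isNilpotent hnil⟩
  rw [← hspi_pow, pow_ind_eq_zero_of_isNilpotent hnil, mul_zero]
end
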